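/- Let Λ be a finitely generated semigroup and ρ : Λ → GL(d,ℝ) a semigroup homomorphism such that for some 1 ≤ i ≤ d−1 and constants c, c' > 0 one has (μ_i − μ_{i+1})(ρ(γ)) ≥ c·|γ|_F − c' for all γ ∈ Λ. Then for every R > 0 the set {γ ∈ Λ : ‖ρ(γ)‖ + ‖ρ(γ)⁻¹‖ ≤ R} is finite; in particular the image ρ(Λ) is a discrete subset of GL(d,ℝ). -/

import Mathlib

open Matrix

/-- Multiset of logarithms of singular values of a real square matrix. -/
noncomputable def sValLog {d : ℕ} (g : Matrix (Fin d) (Fin d) ℝ) : Multiset ℝ :=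
  Multiset.map
    (fun i => (1 / 2 : ℝ) * Real.log ((show (gᵀ * g).IsHermitian by
      simpa [Matrix.conjTranspose_eq_transpose_of_trivial] using
        Matrix.isHermitian_conjTranspose_mul_self g).eigenvalues i))
    Finset.univ.val

/-- `mu g i` : the `i`-th (1-based, in nonincreasing order) logarithm of a singular value. -/
noncomputable def mu {d : ℕ} (g : Matrix (Fin d) (Fin d) ℝ) (i : ℕ) : ℝ :=
  ((sValLog g).sort (· ≤ ·)).getD (d - i) 0

/-- Multiset of logarithms of moduli of the complex eigenvalues of a real square matrix. -/
noncomputable def eValLog {d : ℕ} (g : Matrix (Fin d) (Fin d) ℝ) : Multiset ℝ :=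
  ((g.map (algebraMap ℝ ℂ)).charpoly.roots).map fun z => Real.log ‖z‖

/-- `lam g i` : the `i`-th (1-based, in nonincreasing order) logarithm of the modulus of an
eigenvalue. -/
noncomputable def lam {d : ℕ} (g : Matrix (Fin d) (Fin d) ℝ) (i : ℕ) : ℝ :=
  ((eValLog g).sort (· ≤ ·)).getD (d - i) 0

/-- Euclidean norm of the vector `μ(g) = (μ₁(g),…,μ_d(g))`. -/
noncomputable def muNorm {d : ℕ} (g : Matrix (Fin d) (Fin d) ℝ) : ℝ :=
  Real.sqrt (∑ i ∈ Finset.Icc 1 d, (mu g i) ^ 2)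

/-- Euclidean norm of the vector `λ(g) = (λ₁(g),…,λ_d(g))`. -/
noncomputable def lamNorm {d : ℕ} (g : Matrix (Fin d) (Fin d) ℝ) : ℝ :=
  Real.sqrt (∑ i ∈ Finset.Icc 1 d, (lam g i) ^ 2)

/-- Euclidean norm of the difference `μ(g) − μ(h)`. -/
noncomputable def muDistNorm {d : ℕ} (g h : Matrix (Fin d) (Fin d) ℝ) : ℝ :=
  Real.sqrt (∑ i ∈ Finset.Icc 1 d, (mu g i - mu h i) ^ 2)

/-- Operator norm of a matrix acting on Euclidean space `ℝᵈ`. -/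
noncomputable def opNorm {d : ℕ} (g : Matrix (Fin d) (Fin d) ℝ) : ℝ :=
  ‖LinearMap.toContinuousLinearMap (Matrix.toEuclideanLin g)‖

/-- Word length of a group element with respect to a generating set `F` (using `F ∪ F⁻¹`). -/
noncomputable def wordLength {Γ : Type*} [Group Γ] (F : Finset Γ) (γ : Γ) : ℕ :=
  sInf {k | ∃ w : List Γ, w.length = k ∧ (∀ x ∈ w, x ∈ F ∨ x⁻¹ ∈ F) ∧ w.prod = γ}

/-- Translation length in the Cayley graph. -/
noncomputable def translationLength {Γ : Type*} [Group Γ] (F : Finset Γ) (γ : Γ) : ℕ :=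
  sInf {k | ∃ β : Γ, wordLength F (β⁻¹ * γ * β) = k}

/-- Word length in a semigroup (with identity adjoined) with respect to a finite generating
set `F`. -/
noncomputable def swordLength {Λ : Type*} [Monoid Λ] (F : Finset Λ) (γ : Λ) : ℕ :=
  sInf {k | ∃ w : List Λ, w.length = k ∧ (∀ x ∈ w, x ∈ F) ∧ w.prod = γ}

theorem Matrix.isHermitian_transpose_mul_self {d : ℕ} (g : Matrix (Fin d) (Fin d) ℝ) :
    (gᵀ * g).IsHermitian := by
  simpa [Matrix.conjTranspose_eq_transpose_of_trivial] using
    Matrix.isHermitian_conjTranspose_mul_self g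

lemma opNorm_nonneg {d : ℕ} (g : Matrix (Fin d) (Fin d) ℝ) : 0 ≤ opNorm g := norm_nonneg _

lemma entry_le {d : ℕ} (g : Matrix (Fin d) (Fin d) ℝ) (i j : Fin d) : |g i j| ≤ opNorm g := by
  have h : g i j = ((WithLp.equiv 2 _).symm (g *ᵥ (WithLp.equiv 2 _ ((WithLp.equiv 2 (Fin d → ℝ)).symm (Pi.single j 1)))) : EuclideanSpace ℝ (Fin d)) i := by
    simp [Matrix.mulVec_single]
  have h2 : ∀ v : EuclideanSpace ℝ (Fin d), |v i| ≤ ‖v‖ := by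
    intro v
    have := abs_real_inner_le_norm (EuclideanSpace.single i (1:ℝ)) v
    rw [EuclideanSpace.inner_single_left, EuclideanSpace.norm_single, norm_one, one_mul] at this; simpa using this
  rw [h]
  change |(Matrix.toEuclideanLin g ((WithLp.equiv 2 (Fin d → ℝ)).symm (Pi.single j 1))) i| ≤ _
  calc _ ≤ ‖Matrix.toEuclideanLin g ((WithLp.equiv 2 (Fin d → ℝ)).symm (Pi.single j 1))‖ := h2 _
    _ ≤ opNorm g * ‖((WithLp.equiv 2 (Fin d → ℝ)).symm (Pi.single j 1) : EuclideanSpace ℝ (Fin d))‖ := by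
        exact (LinearMap.toContinuousLinearMap (Matrix.toEuclideanLin g)).le_opNorm _
    _ ≤ opNorm g := by
        have : ((WithLp.equiv 2 (Fin d → ℝ)).symm (Pi.single j 1) : EuclideanSpace ℝ (Fin d)) = EuclideanSpace.single j 1 := rfl
        rw [this, EuclideanSpace.norm_single, norm_one, mul_one]


lemma det_le {d : ℕ} (A : Matrix (Fin d) (Fin d) ℝ) {M : ℝ} (hM : 0 ≤ M)
    (h : ∀ i j, |A i j| ≤ M) : |A.det| ≤ Nat.factorial d * M ^ d := by
  rw [Matrix.det_apply]
  calc |∑ σ : Equiv.Perm (Fin d), Equiv.Perm.sign σ • ∏ i, A (σ i) i|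
      ≤ ∑ σ : Equiv.Perm (Fin d), |Equiv.Perm.sign σ • ∏ i, A (σ i) i| :=
        Finset.abs_sum_le_sum_abs _ _
    _ ≤ ∑ σ : Equiv.Perm (Fin d), M ^ d := by
        apply Finset.sum_le_sum
        intro σ _
        rw [Units.smul_def, zsmul_eq_mul, abs_mul]
        have h1 : |((Equiv.Perm.sign σ : ℤ) : ℝ)| = 1 := by
          rcases Int.units_eq_one_or (Equiv.Perm.sign σ) with h' | h' <;> simp [h']
        rw [h1, one_mul, Finset.abs_prod]
        calc ∏ i, |A (σ i) i| ≤ ∏ _i : Fin d, M := Finset.prod_le_prod (by intros; positivity) (by intros; apply h)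
          _ = M ^ d := by simp
    _ = Nat.factorial d * M ^ d := by simp [Finset.sum_const, Fintype.card_perm, mul_comm]

lemma sum_eig {d : ℕ} (A : Matrix (Fin d) (Fin d) ℝ) (hA : A.IsHermitian) :
    ∑ k, hA.eigenvalues k = A.trace := by
  conv_rhs => rw [hA.spectral_theorem]
  rw [Unitary.conjStarAlgAut_apply, Matrix.trace_mul_cycle]
  have : (star (hA.eigenvectorUnitary : Matrix (Fin d) (Fin d) ℝ)) * (hA.eigenvectorUnitary : Matrix (Fin d) (Fin d) ℝ) = 1 :=
    Matrix.mem_unitaryGroup_iff'.mp (hA.eigenvectorUnitary).2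
  rw [this, one_mul, Matrix.trace_diagonal]
  simp

lemma trace_tr_mul {d : ℕ} (A : Matrix (Fin d) (Fin d) ℝ) :
    (Aᵀ * A).trace = ∑ j, ∑ i, (A i j) ^ 2 := by
  simp [Matrix.trace, Matrix.diag, Matrix.mul_apply, sq]

lemma eig_bounds {d : ℕ} (g ginv : Matrix (Fin d) (Fin d) ℝ) (hgi : g * ginv = 1)
    {R : ℝ} (hR : 0 < R) (hg : opNorm g ≤ R) (hgi2 : opNorm ginv ≤ R) (k : Fin d) :
    (1 / (Nat.factorial d * R ^ d)) ^ 2 / ((d : ℝ) ^ 2 * R ^ 2) ^ (d - 1)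
      ≤ (Matrix.isHermitian_transpose_mul_self g).eigenvalues k ∧
    (Matrix.isHermitian_transpose_mul_self g).eigenvalues k ≤ (d : ℝ) ^ 2 * R ^ 2 := by
  set hH := Matrix.isHermitian_transpose_mul_self g with hHdef
  set B : ℝ := (d : ℝ) ^ 2 * R ^ 2 with hB
  have hd : 0 < d := Fin.pos k
  have hBpos : 0 < B := by positivity
  have hnn : ∀ j, 0 ≤ hH.eigenvalues j := fun j =>
    Matrix.eigenvalues_conjTranspose_mul_self_nonneg g j
  -- upper bound
  have htr : (gᴴ * g).trace = ∑ j, ∑ i, (g i j) ^ 2 := by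
    simp [Matrix.trace, Matrix.diag, Matrix.mul_apply, sq]
  have hub : ∀ j, hH.eigenvalues j ≤ B := by
    intro j
    have h1 : hH.eigenvalues j ≤ ∑ l, hH.eigenvalues l :=
      Finset.single_le_sum (fun l _ => hnn l) (Finset.mem_univ j)
    have h2 : ∑ l, hH.eigenvalues l = (gᴴ * g).trace := sum_eig _ hH
    have h3 : (gᴴ * g).trace ≤ B := by
      rw [htr, hB]
      calc ∑ j, ∑ i, (g i j) ^ 2 ≤ ∑ _j : Fin d, ∑ _i : Fin d, R ^ 2 := by
            apply Finset.sum_le_sum; intro a _; apply Finset.sum_le_sum; intro b _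
            have := entry_le g b a
            nlinarith [abs_nonneg (g b a), neg_abs_le (g b a), le_abs_self (g b a)]
        _ = (d:ℝ)^2 * R^2 := by simp [Finset.sum_const]; ring
    linarith
  refine ⟨?_, hub k⟩
  -- lower bound
  have hdetprod : (gᴴ * g).det = ∏ j, hH.eigenvalues j := by
    have := hH.det_eq_prod_eigenvalues
    simpa using this
  have hdet2 : (gᴴ * g).det = g.det ^ 2 := by
    rw [Matrix.det_mul, Matrix.det_conjTranspose]
    simp [sq, mul_comm]
  have hdetinv : g.det * ginv.det = 1 := by
    rw [← Matrix.det_mul, hgi, Matrix.det_one]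
  have hdetginv : |ginv.det| ≤ Nat.factorial d * R ^ d :=
    det_le ginv hR.le (fun a b => (entry_le ginv a b).trans hgi2)
  have hfac : (0:ℝ) < Nat.factorial d * R ^ d := by
    have := Nat.factorial_pos d
    positivity
  have hdg : g.det ≠ 0 := by
    intro h; rw [h, zero_mul] at hdetinv; exact one_ne_zero hdetinv.symm
  have hlow : (1 / (Nat.factorial d * R ^ d)) ^ 2 ≤ g.det ^ 2 := by
    have h1 : |g.det| * |ginv.det| = 1 := by rw [← abs_mul, hdetinv, abs_one]
    have h2 : 0 < |ginv.det| := by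
      rcases eq_or_lt_of_le (abs_nonneg ginv.det) with h | h
      · rw [← h] at h1; simp at h1
      · exact h
    have h3 : |g.det| = 1 / |ginv.det| := by field_simp; linarith [h1]
    have h4 : 1 / (Nat.factorial d * R ^ d) ≤ |g.det| := by
      rw [h3]
      apply one_div_le_one_div_of_le h2 hdetginv
    calc (1 / (Nat.factorial d * R ^ d)) ^ 2 ≤ |g.det| ^ 2 := by
          apply pow_le_pow_left₀ (by positivity) h4
      _ = g.det ^ 2 := sq_abs _
  -- prod over erase
  have hprod : ∏ j ∈ Finset.univ.erase k, hH.eigenvalues j ≤ B ^ (d - 1) := by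
    calc ∏ j ∈ Finset.univ.erase k, hH.eigenvalues j
        ≤ ∏ _j ∈ Finset.univ.erase k, B :=
          Finset.prod_le_prod (fun j _ => hnn j) (fun j _ => hub j)
      _ = B ^ (d - 1) := by
          rw [Finset.prod_const, Finset.card_erase_of_mem (Finset.mem_univ k),
            Finset.card_univ, Fintype.card_fin]
  have hsplit : hH.eigenvalues k * ∏ j ∈ Finset.univ.erase k, hH.eigenvalues j = g.det ^ 2 := by
    rw [← hdet2, hdetprod, ← Finset.mul_prod_erase Finset.univ _ (Finset.mem_univ k)]
  have hBp : 0 < B ^ (d-1) := pow_pos hBpos _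
  rw [div_le_iff₀ hBp]
  calc (1 / (Nat.factorial d * R ^ d)) ^ 2 ≤ g.det ^ 2 := hlow
    _ = hH.eigenvalues k * ∏ j ∈ Finset.univ.erase k, hH.eigenvalues j := hsplit.symm
    _ ≤ hH.eigenvalues k * B ^ (d-1) := by
        apply mul_le_mul_of_nonneg_left hprod (hnn k)

lemma mu_bound {d : ℕ} (g : Matrix (Fin d) (Fin d) ℝ) (hd : 0 < d) {a b : ℝ}
    (hab : ∀ k : Fin d,
      a ≤ (1/2 : ℝ) * Real.log ((Matrix.isHermitian_transpose_mul_self g).eigenvalues k) ∧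
      (1/2 : ℝ) * Real.log ((Matrix.isHermitian_transpose_mul_self g).eigenvalues k) ≤ b)
    {n : ℕ} (hn : 0 < n) : a ≤ mu g n ∧ mu g n ≤ b := by
  have hlen : ((sValLog g).sort (· ≤ ·)).length = d := by
    rw [Multiset.length_sort, sValLog, Multiset.card_map]
    simp
  have hidx : d - n < ((sValLog g).sort (· ≤ ·)).length := by
    rw [hlen]; exact Nat.sub_lt hd hn
  have : mu g n = ((sValLog g).sort (· ≤ ·))[d - n] := List.getD_eq_getElem _ _ hidx
  have hmem : mu g n ∈ sValLog g := by
    rw [this, ← Multiset.mem_sort (· ≤ ·)]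
    exact List.getElem_mem hidx
  rw [sValLog, Multiset.mem_map] at hmem
  obtain ⟨k, -, hk⟩ := hmem
  rw [← hk]
  exact hab k

lemma finite_of_word_bound {Λ : Type*} [Monoid Λ] (F : Finset Λ) (N : ℕ) (S : Set Λ)
    (h : ∀ γ ∈ S, ∃ w : List Λ, (∀ x ∈ w, x ∈ F) ∧ w.prod = γ ∧ w.length ≤ N) :
    S.Finite := by
  have hfin : {l : List ↥F | l.length ≤ N}.Finite := List.finite_length_le _ N
  apply Set.Finite.subset (hfin.image (fun l => (l.map Subtype.val).prod))
  intro γ hγ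
  obtain ⟨w, hw1, hw2, hw3⟩ := h γ hγ
  refine ⟨w.pmap (fun x hx => (⟨x, hx⟩ : ↥F)) hw1, ?_, ?_⟩
  · simpa using hw3
  · simp [List.map_pmap, ← hw2]

/-- If a semigroup homomorphism `ρ : Λ → GL(d,ℝ)` satisfies the uniform singular value gap
`(μ_i − μ_{i+1})(ρ(γ)) ≥ c·|γ|_F − c'`, then for every `R > 0` the set
`{γ ∈ Λ : ‖ρ(γ)‖ + ‖ρ(γ)⁻¹‖ ≤ R}` is finite; in particular `ρ(Λ)` is discrete. -/
theorem finite_of_singular_gap {Λ : Type*} [Monoid Λ] {d : ℕ} (F : Finset Λ)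
    (hgen : Submonoid.closure (F : Set Λ) = ⊤) (ρ : Λ →* GL (Fin d) ℝ)
    (i : ℕ) (h1 : 1 ≤ i) (h2 : i ≤ d - 1) (c c' : ℝ) (hc : 0 < c) (hc' : 0 < c')
    (hgap : ∀ γ : Λ,
      mu ((ρ γ : GL (Fin d) ℝ) : Matrix (Fin d) (Fin d) ℝ) i
          - mu ((ρ γ : GL (Fin d) ℝ) : Matrix (Fin d) (Fin d) ℝ) (i + 1)
        ≥ c * (swordLength F γ : ℝ) - c') :
    ∀ R : ℝ, 0 < R →
      {γ : Λ | opNorm ((ρ γ : GL (Fin d) ℝ) : Matrix (Fin d) (Fin d) ℝ)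
          + opNorm (((ρ γ)⁻¹ : GL (Fin d) ℝ) : Matrix (Fin d) (Fin d) ℝ) ≤ R}.Finite := by
  intro R hR
  have hd2 : 2 ≤ d := by omega
  have hd : 0 < d := by omega
  set B : ℝ := (d : ℝ) ^ 2 * R ^ 2 with hB
  have hBpos : 0 < B := by positivity
  set m : ℝ := (1 / (Nat.factorial d * R ^ d)) ^ 2 / B ^ (d - 1) with hm
  have hmpos : 0 < m := by
    have := Nat.factorial_pos d
    positivity
  set a : ℝ := (1/2 : ℝ) * Real.log m with ha
  set b : ℝ := (1/2 : ℝ) * Real.log B with hb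
  set N : ℕ := ⌈(b - a + c') / c⌉₊ with hN
  apply finite_of_word_bound F N
  intro γ hγ
  -- the two matrices
  set g : Matrix (Fin d) (Fin d) ℝ := ((ρ γ : GL (Fin d) ℝ) : Matrix (Fin d) (Fin d) ℝ) with hgdef
  set ginv : Matrix (Fin d) (Fin d) ℝ := (((ρ γ)⁻¹ : GL (Fin d) ℝ) : Matrix (Fin d) (Fin d) ℝ)
    with hginvdef
  have hprod1 : g * ginv = 1 := by
    rw [hgdef, hginvdef, ← Matrix.GeneralLinearGroup.coe_mul, mul_inv_cancel]
    rfl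
  have hγ' : opNorm g + opNorm ginv ≤ R := hγ
  have hg1 : opNorm g ≤ R := by
    have := opNorm_nonneg ginv; linarith
  have hg2 : opNorm ginv ≤ R := by
    have := opNorm_nonneg g; linarith
  -- eigenvalue bounds
  have hab : ∀ k : Fin d,
      a ≤ (1/2 : ℝ) * Real.log ((Matrix.isHermitian_transpose_mul_self g).eigenvalues k) ∧
      (1/2 : ℝ) * Real.log ((Matrix.isHermitian_transpose_mul_self g).eigenvalues k) ≤ b := by
    intro k
    obtain ⟨hlo, hhi⟩ := eig_bounds g ginv hprod1 hR hg1 hg2 k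
    constructor
    · rw [ha]
      have := Real.log_le_log hmpos hlo
      linarith
    · rw [hb]
      have hpos : 0 < (Matrix.isHermitian_transpose_mul_self g).eigenvalues k :=
        lt_of_lt_of_le hmpos hlo
      have := Real.log_le_log hpos hhi
      linarith
  have hmu1 := mu_bound g hd hab (n := i) (by omega)
  have hmu2 := mu_bound g hd hab (n := i + 1) (by omega)
  -- bound on word length
  have hgap' := hgap γ
  have hlen : (swordLength F γ : ℝ) ≤ (b - a + c') / c := by
    rw [le_div_iff₀ hc]
    have : mu g i - mu g (i + 1) ≤ b - a := by
      have := hmu1.2; have := hmu2.1; linarith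
    have h5 : c * (swordLength F γ : ℝ) - c' ≤ b - a := le_trans hgap' this
    linarith
  have hlenN : swordLength F γ ≤ N := by
    have h6 : (swordLength F γ : ℝ) ≤ (N : ℝ) := le_trans hlen (Nat.le_ceil _)
    exact_mod_cast h6
  -- extract a word realizing the word length
  have hmem : γ ∈ Submonoid.closure (F : Set Λ) := by rw [hgen]; trivial
  obtain ⟨l, hl1, hl2⟩ := Submonoid.exists_list_of_mem_closure hmem
  have hne : {k | ∃ w : List Λ, w.length = k ∧ (∀ x ∈ w, x ∈ F) ∧ w.prod = γ}.Nonempty :=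
    ⟨l.length, l, rfl, hl1, hl2⟩
  obtain ⟨w, hw1, hw2, hw3⟩ := Nat.sInf_mem hne
  exact ⟨w, hw2, hw3, by rw [hw1]; exact hlenN⟩
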